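/- Let G be a finite simple connected graph, let u, v be vertices, and consider a GNN of depth r with ‖∇φ_l‖ ≤ α and max{‖∇ψ_l‖, 1} ≤ β for all l = 0,…,r−1. Then ‖∂h_u^{(r)}/∂x_v‖ ≤ (2αβ)^r · Σ_{l=0}^{r} (Â^l)_{uv}, where (Â^l)_{uv} is the (u,v) entry of the l-th power of the normalized adjacency matrix. -/

import Mathlib

/-!
Write `b_l(w) = ‖∂h_w^{(l)}/∂x_v‖`. The chain rule through one layer, together with
`‖(a, b)‖₂ ≤ ‖a‖ + ‖b‖` for the pairing fed to `φ_l` and the symmetry of `Â`, gives the linear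
recursion `b_{l+1} ≤ α (b_l + β Â b_l)` with `b_0 = δ_v`. As `Â` is entrywise nonnegative, this
recursion is dominated by `(2αβ)^l Σ_{j ≤ l} (Â^j)_{·v}`: multiplying the partial geometric sum
`Σ_{j ≤ l} Â^j` by `Â` stays below `Σ_{j ≤ l+1} Â^j`, and `β ≥ 1` absorbs the term `b_l`.
-/

open Matrix Finset

/-- The normalized adjacency matrix `Â = D^{-1/2} A D^{-1/2}` of a graph. -/
noncomputable def nadj {V : Type*} [Fintype V] [DecidableEq V] (G : SimpleGraph V)
    [DecidableRel G.Adj] : Matrix V V ℝ :=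
  Matrix.diagonal (fun v => (Real.sqrt (G.degree v))⁻¹) * G.adjMatrix ℝ *
    Matrix.diagonal (fun v => (Real.sqrt (G.degree v))⁻¹)

/-- The GNN iteration: `h⁰_v(X) = X v` and
`h^{l+1}_v(X) = φ_l (h^l_v(X), Σ_u Â_{uv} ψ_l (h^l_u(X)))`, where the sum over all `u` weighted
by `Â_{uv}` agrees with the sum over the neighborhood of `v` since `Â_{uv} = 0` otherwise.
Features live in Euclidean space (so operator norms are spectral norms), and the two arguments
of `φ_l` are paired with the `L²` product norm. -/
noncomputable def gnn {V : Type*} [Fintype V] [DecidableEq V] (G : SimpleGraph V)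
    [DecidableRel G.Adj] (d : ℕ)
    (φ : ℕ → WithLp 2 (EuclideanSpace ℝ (Fin d) × EuclideanSpace ℝ (Fin d)) →
      EuclideanSpace ℝ (Fin d))
    (ψ : ℕ → EuclideanSpace ℝ (Fin d) → EuclideanSpace ℝ (Fin d)) :
    ℕ → (V → EuclideanSpace ℝ (Fin d)) → V → EuclideanSpace ℝ (Fin d)
  | 0, X, v => X v
  | (l + 1), X, v =>
      φ l ((WithLp.equiv 2 _).symm
        (gnn G d φ ψ l X v, ∑ u : V, nadj G u v • ψ l (gnn G d φ ψ l X u)))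

namespace Matrix

variable {n R : Type*} [Fintype n] [Semiring R] [PartialOrder R] [IsOrderedRing R]
  {A : Matrix n n R}

lemma monotone_mulVec (hA : ∀ i j, 0 ≤ A i j) : Monotone (A *ᵥ ·) :=
  fun _ _ hxy i => sum_le_sum fun j _ => mul_le_mul_of_nonneg_left (hxy j) (hA i j)

variable [DecidableEq n]

lemma mul_geom_sum_apply_le (hA : ∀ i j, 0 ≤ A i j) (l : ℕ) (i j : n) :
    (A * ∑ k ∈ range l, A ^ k) i j ≤ ∑ k ∈ range (l + 1), (A ^ k) i j := by
  rw [← sum_apply, geom_sum_succ, add_apply]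
  exact le_add_of_nonneg_right (pow_apply_nonneg hA 0 i j)

lemma monotone_sum_range_pow_apply (hA : ∀ i j, 0 ≤ A i j) (i j : n) :
    Monotone fun l => ∑ k ∈ range l, (A ^ k) i j :=
  monotone_nat_of_le_succ fun l => by
    rw [sum_range_succ]
    exact le_add_of_nonneg_right (pow_apply_nonneg hA l i j)

theorem le_pow_mul_sum_pow_apply {A : Matrix n n ℝ} (hA : ∀ i j, 0 ≤ A i j) {α β : ℝ}
    (hα : 0 ≤ α) (hβ : 1 ≤ β) {b : ℕ → n → ℝ} {v : n} (h₀ : ∀ w, b 0 w ≤ if w = v then 1 else 0)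
    (hsucc : ∀ l w, b (l + 1) w ≤ α * (b l w + β * (A *ᵥ b l) w)) (l : ℕ) (w : n) :
    b l w ≤ (2 * α * β) ^ l * ∑ k ∈ range (l + 1), (A ^ k) w v := by
  induction l generalizing w with
  | zero => simpa [one_apply] using h₀ w
  | succ l ih =>
    set S : ℕ → n → ℝ := fun m i => ∑ k ∈ range (m + 1), (A ^ k) i v
    set K := (2 * α * β) ^ l
    have hK : 0 ≤ K := by positivity
    have hS : 0 ≤ S (l + 1) w := sum_nonneg fun k _ => pow_apply_nonneg hA k w v
    have hAS : (A *ᵥ S l) w ≤ S (l + 1) w := by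
      simpa [mulVec, dotProduct, mul_apply, sum_apply] using mul_geom_sum_apply_le hA (l + 1) w v
    have hb : b l w ≤ K * S (l + 1) w :=
      (ih w).trans (mul_le_mul_of_nonneg_left
        (monotone_sum_range_pow_apply hA w v (Nat.le_succ _)) hK)
    have hAb : (A *ᵥ b l) w ≤ K * S (l + 1) w :=
      calc (A *ᵥ b l) w ≤ (A *ᵥ (K • S l)) w := monotone_mulVec hA ih w
        _ = K * (A *ᵥ S l) w := by rw [mulVec_smul, Pi.smul_apply, smul_eq_mul]
        _ ≤ K * S (l + 1) w := mul_le_mul_of_nonneg_left hAS hK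
    calc b (l + 1) w ≤ α * (b l w + β * (A *ᵥ b l) w) := hsucc l w
      _ ≤ α * (β * (K * S (l + 1) w) + β * (K * S (l + 1) w)) := by
        gcongr
        exact hb.trans (le_mul_of_one_le_left (mul_nonneg hK hS) hβ)
      _ = (2 * α * β) ^ (l + 1) * S (l + 1) w := by ring

end Matrix

lemma WithLp.norm_toLp_prod_le_add {p : ENNReal} [Fact (1 ≤ p)] {E F : Type*}
    [SeminormedAddCommGroup E] [SeminormedAddCommGroup F] (a : E) (b : F) :
    ‖toLp p (a, b)‖ ≤ ‖a‖ + ‖b‖ :=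
  calc ‖toLp p (a, b)‖ = ‖toLp p (a, (0 : F)) + toLp p ((0 : E), b)‖ := by
        rw [← WithLp.toLp_add, Prod.mk_add_mk, add_zero, zero_add]
    _ ≤ ‖a‖ + ‖b‖ := (norm_add_le _ _).trans_eq (by rw [norm_toLp_fst, norm_toLp_snd])

section NormFDeriv

variable {𝕜 E F G : Type*} [NontriviallyNormedField 𝕜] [NormedAddCommGroup E] [NormedSpace 𝕜 E]
  [NormedAddCommGroup F] [NormedSpace 𝕜 F] [NormedAddCommGroup G] [NormedSpace 𝕜 G] {x : E}

@[fun_prop]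
lemma WithLp.differentiable_toLp_prod (p : ENNReal) [Fact (1 ≤ p)] :
    Differentiable 𝕜 (WithLp.toLp p : F × G → WithLp p (F × G)) :=
  (WithLp.prodContinuousLinearEquiv p 𝕜 F G).symm.differentiable

lemma norm_fderiv_comp_le {g : F → G} {f : E → F} {C : ℝ} (hg : DifferentiableAt 𝕜 g (f x))
    (hf : DifferentiableAt 𝕜 f x) (hC : ‖fderiv 𝕜 g (f x)‖ ≤ C) :
    ‖fderiv 𝕜 (fun y => g (f y)) x‖ ≤ C * ‖fderiv 𝕜 f x‖ := by
  rw [fderiv_fun_comp x hg hf]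
  exact (ContinuousLinearMap.opNorm_comp_le _ _).trans
    (mul_le_mul_of_nonneg_right hC (norm_nonneg _))

lemma norm_fderiv_sum_smul_le {ι : Type*} (s : Finset ι) (c : ι → 𝕜) {f : ι → E → F}
    (hf : ∀ i ∈ s, DifferentiableAt 𝕜 (f i) x) :
    ‖fderiv 𝕜 (fun y => ∑ i ∈ s, c i • f i y) x‖ ≤ ∑ i ∈ s, ‖c i‖ * ‖fderiv 𝕜 (f i) x‖ := by
  rw [fderiv_fun_sum (A := fun i y => c i • f i y) fun i hi => (hf i hi).const_smul (c i)]
  refine (norm_sum_le _ _).trans (sum_le_sum fun i hi => ?_)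
  rw [fderiv_fun_const_smul (hf i hi), norm_smul]

lemma norm_fderiv_toLp_prod_le {p : ENNReal} [Fact (1 ≤ p)] {f : E → F} {g : E → G}
    (hf : DifferentiableAt 𝕜 f x) (hg : DifferentiableAt 𝕜 g x) :
    ‖fderiv 𝕜 (fun y => WithLp.toLp p (f y, g y)) x‖ ≤ ‖fderiv 𝕜 f x‖ + ‖fderiv 𝕜 g x‖ := by
  have hpair : HasFDerivAt (fun y => WithLp.toLp p (f y, g y)) _ x :=
    (WithLp.prodContinuousLinearEquiv p 𝕜 F G).symm.toContinuousLinearMap.hasFDerivAt.comp x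
      (hf.hasFDerivAt.prodMk hg.hasFDerivAt)
  rw [hpair.fderiv]
  refine ContinuousLinearMap.opNorm_le_bound _ (by positivity) fun v => ?_
  calc ‖WithLp.toLp p (fderiv 𝕜 f x v, fderiv 𝕜 g x v)‖
      ≤ ‖fderiv 𝕜 f x v‖ + ‖fderiv 𝕜 g x v‖ := WithLp.norm_toLp_prod_le_add _ _
    _ ≤ (‖fderiv 𝕜 f x‖ + ‖fderiv 𝕜 g x‖) * ‖v‖ := by
      rw [add_mul]
      exact add_le_add ((fderiv 𝕜 f x).le_opNorm v) ((fderiv 𝕜 g x).le_opNorm v)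

end NormFDeriv

section GNN

variable {V : Type*} [Fintype V] [DecidableEq V] (G : SimpleGraph V) [DecidableRel G.Adj]

lemma nadj_apply (u v : V) :
    nadj G u v = (√(G.degree u))⁻¹ * G.adjMatrix ℝ u v * (√(G.degree v))⁻¹ := by
  rw [nadj, mul_diagonal, diagonal_mul]

lemma nadj_nonneg (u v : V) : 0 ≤ nadj G u v := by
  rw [nadj_apply, SimpleGraph.adjMatrix_apply]
  split_ifs <;> positivity

lemma nadj_comm (u v : V) : nadj G u v = nadj G v u := by
  rw [nadj_apply, nadj_apply, G.isSymm_adjMatrix.apply u v]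
  ring

variable {d : ℕ}
  {φ : ℕ → WithLp 2 (EuclideanSpace ℝ (Fin d) × EuclideanSpace ℝ (Fin d)) →
    EuclideanSpace ℝ (Fin d)}
  {ψ : ℕ → EuclideanSpace ℝ (Fin d) → EuclideanSpace ℝ (Fin d)}
  {E : Type*} [NormedAddCommGroup E] [NormedSpace ℝ E] {Xs : E → V → EuclideanSpace ℝ (Fin d)}

lemma differentiable_gnn (hφ : ∀ l, Differentiable ℝ (φ l)) (hψ : ∀ l, Differentiable ℝ (ψ l))
    (hXs : ∀ u, Differentiable ℝ fun x => Xs x u) (l : ℕ) (w : V) :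
    Differentiable ℝ fun x => gnn G d φ ψ l (Xs x) w := by
  induction l generalizing w with
  | zero => exact hXs w
  | succ l ih =>
    have := hφ l
    have := hψ l
    simp only [gnn, WithLp.equiv_symm_apply]
    fun_prop

lemma norm_fderiv_gnn_succ_le {l : ℕ} {α β : ℝ} (hφ : Differentiable ℝ (φ l))
    (hψ : Differentiable ℝ (ψ l)) (hφα : ∀ p, ‖fderiv ℝ (φ l) p‖ ≤ α)
    (hψβ : ∀ p, ‖fderiv ℝ (ψ l) p‖ ≤ β) {x : E}
    (hXs : ∀ u, DifferentiableAt ℝ (fun y => gnn G d φ ψ l (Xs y) u) x) (w : V) :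
    ‖fderiv ℝ (fun y => gnn G d φ ψ (l + 1) (Xs y) w) x‖ ≤
      α * (‖fderiv ℝ (fun y => gnn G d φ ψ l (Xs y) w) x‖ +
        β * (nadj G *ᵥ fun u => ‖fderiv ℝ (fun y => gnn G d φ ψ l (Xs y) u) x‖) w) := by
  set h : V → E → EuclideanSpace ℝ (Fin d) := fun u y => gnn G d φ ψ l (Xs y) u
  have hα : 0 ≤ α := (norm_nonneg _).trans (hφα 0)
  have hagg : ‖fderiv ℝ (fun y => ∑ u, nadj G u w • ψ l (h u y)) x‖ ≤
      β * (nadj G *ᵥ fun u => ‖fderiv ℝ (h u) x‖) w :=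
    calc _ ≤ ∑ u, ‖nadj G u w‖ * ‖fderiv ℝ (fun y => ψ l (h u y)) x‖ :=
          norm_fderiv_sum_smul_le _ _ fun u _ => (hψ _).comp x (hXs u)
      _ ≤ ∑ u, nadj G w u * (β * ‖fderiv ℝ (h u) x‖) := sum_le_sum fun u _ => by
          rw [Real.norm_of_nonneg (nadj_nonneg G u w), nadj_comm]
          exact mul_le_mul_of_nonneg_left (norm_fderiv_comp_le (hψ _) (hXs u) (hψβ _))
            (nadj_nonneg G w u)
      _ = β * (nadj G *ᵥ fun u => ‖fderiv ℝ (h u) x‖) w := by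
          simp only [mulVec, dotProduct, mul_sum]
          exact sum_congr rfl fun u _ => by ring
  have hpair : DifferentiableAt ℝ
      (fun y => WithLp.toLp 2 (h w y, ∑ u, nadj G u w • ψ l (h u y))) x := by
    fun_prop
  calc ‖fderiv ℝ (fun y => φ l (WithLp.toLp 2 (h w y, ∑ u, nadj G u w • ψ l (h u y)))) x‖
      ≤ α * ‖fderiv ℝ (fun y => WithLp.toLp 2 (h w y, ∑ u, nadj G u w • ψ l (h u y))) x‖ :=
        norm_fderiv_comp_le (hφ _) hpair (hφα _)
    _ ≤ α * (‖fderiv ℝ (h w) x‖ + β * (nadj G *ᵥ fun u => ‖fderiv ℝ (h u) x‖) w) := by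
        gcongr
        exact (norm_fderiv_toLp_prod_le (hXs w) (by fun_prop)).trans (by gcongr)

end GNN

lemma norm_fderiv_update_apply_le {𝕜 ι F : Type*} [NontriviallyNormedField 𝕜] [DecidableEq ι]
    [NormedAddCommGroup F] [NormedSpace 𝕜 F] (X : ι → F) (v w : ι) (y : F) :
    ‖fderiv 𝕜 (fun z => Function.update X v z w) y‖ ≤ if w = v then 1 else 0 := by
  rcases eq_or_ne w v with rfl | hwv
  · simpa using ContinuousLinearMap.norm_id_le
  · simp [hwv]

theorem jacobian_bound_by_adj_powers_general {V : Type*} [Fintype V] [DecidableEq V]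
    (G : SimpleGraph V) [DecidableRel G.Adj]
    (d r : ℕ)
    (φ : ℕ → WithLp 2 (EuclideanSpace ℝ (Fin d) × EuclideanSpace ℝ (Fin d)) →
      EuclideanSpace ℝ (Fin d))
    (ψ : ℕ → EuclideanSpace ℝ (Fin d) → EuclideanSpace ℝ (Fin d))
    (α β : ℝ)
    (hφdiff : ∀ l, ContDiff ℝ 1 (φ l))
    (hψdiff : ∀ l, ContDiff ℝ 1 (ψ l))
    (hφ : ∀ l p, ‖fderiv ℝ (φ l) p‖ ≤ α)
    (hψ : ∀ l p, ‖fderiv ℝ (ψ l) p‖ ≤ β)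
    (hβ : 1 ≤ β)
    (X : V → EuclideanSpace ℝ (Fin d)) (u v : V) :
    ‖fderiv ℝ (fun y => gnn G d φ ψ r (Function.update X v y) u) (X v)‖ ≤
      (2 * α * β) ^ r * ∑ l ∈ Finset.range (r + 1), (nadj G ^ l) u v := by
  have hφd : ∀ l, Differentiable ℝ (φ l) := fun l => (hφdiff l).differentiable one_ne_zero
  have hψd : ∀ l, Differentiable ℝ (ψ l) := fun l => (hψdiff l).differentiable one_ne_zero
  have hdiff : ∀ l w, Differentiable ℝ fun y => gnn G d φ ψ l (Function.update X v y) w :=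
    differentiable_gnn G hφd hψd
      (differentiable_pi.1 fun y => (hasFDerivAt_update X y).differentiableAt)
  exact Matrix.le_pow_mul_sum_pow_apply (nadj_nonneg G) ((norm_nonneg _).trans (hφ 0 0)) hβ
    (b := fun l w => ‖fderiv ℝ (fun y => gnn G d φ ψ l (Function.update X v y) w) (X v)‖)
    (fun w => norm_fderiv_update_apply_le X v w (X v))
    (fun l w => norm_fderiv_gnn_succ_le G (hφd l) (hψd l) (hφ l) (hψ l)
      (fun w => (hdiff l w).differentiableAt) w) r u

/-- for a GNN of depth `r` with `‖∇φ_l‖ ≤ α` and `max {‖∇ψ_l‖, 1} ≤ β`,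
`‖∂h_u^{(r)}/∂x_v‖ ≤ (2αβ)^r · Σ_{l=0}^{r} (Â^l)_{uv}`. -/
theorem jacobian_bound_by_adj_powers {V : Type*} [Fintype V] [DecidableEq V]
    (G : SimpleGraph V) [DecidableRel G.Adj]
    (hconn : G.Connected) (hcard : 2 ≤ Fintype.card V)
    (d r : ℕ)
    (φ : ℕ → WithLp 2 (EuclideanSpace ℝ (Fin d) × EuclideanSpace ℝ (Fin d)) →
      EuclideanSpace ℝ (Fin d))
    (ψ : ℕ → EuclideanSpace ℝ (Fin d) → EuclideanSpace ℝ (Fin d))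
    (α β : ℝ)
    (hφdiff : ∀ l, ContDiff ℝ 1 (φ l))
    (hψdiff : ∀ l, ContDiff ℝ 1 (ψ l))
    (hφ : ∀ l p, ‖fderiv ℝ (φ l) p‖ ≤ α)
    (hψ : ∀ l p, ‖fderiv ℝ (ψ l) p‖ ≤ β)
    (hβ : 1 ≤ β)
    (X : V → EuclideanSpace ℝ (Fin d)) (u v : V) :
    ‖fderiv ℝ (fun y => gnn G d φ ψ r (Function.update X v y) u) (X v)‖ ≤
      (2 * α * β) ^ r * ∑ l ∈ Finset.range (r + 1), (nadj G ^ l) u v :=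
  jacobian_bound_by_adj_powers_general G d r φ ψ α β hφdiff hψdiff hφ hψ hβ X u v
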